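/- arXiv:1908.11182 — 6 statements merged into one kernel-verified Lean document; each statement's English description precedes it below -/
import Mathlib

section
/- Let A be a positive operator on a complex Hilbert space H and let T be a bounded operator admitting an A-adjoint that is A-self-adjoint (i.e., AT = T*A). Then the A-numerical radius of T equals its A-operator seminorm: w_A(T) = ‖T‖_A. -/
/-!
Since `A T` is self-adjoint, `T` is symmetric for the semi-inner product `⟨x, y⟩_A`, so the
classical polarization argument goes through:
`4 Re ⟨T x, y⟩_A = ⟨T (x + y), x + y⟩_A - ⟨T (x - y), x - y⟩_A ≤ 2 w_A(T) (‖x‖_A² + ‖y‖_A²)`,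
and `y = T x / ‖T x‖_A` gives `‖T x‖_A ≤ w_A(T)` for every `A`-unit vector `x`; the reverse
inequality is Cauchy–Schwarz. Restricting `x` to `closure (range A)` changes nothing, because
`H = closure (range A) ⊕ ker A` and, `T` having an `A`-adjoint `S`, `A (T x) = S† (A x)` only
depends on `A x`.
-/

noncomputable section
open Complex ContinuousLinearMap

variable {H : Type*} [NormedAddCommGroup H] [InnerProductSpace ℂ H] [CompleteSpace H]

/-- The `A`-inner product `⟨x,y⟩_A = ⟨Ax,y⟩`. -/
def innA (A : H →L[ℂ] H) (x y : H) : ℂ := inner ℂ (A x) y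

/-- The `A`-seminorm of a vector, `‖x‖_A = √⟨x,x⟩_A`. -/
def vnormA (A : H →L[ℂ] H) (x : H) : ℝ := Real.sqrt (innA A x x).re

/-- The `A`-numerical radius `w_A(T) = sup{|⟨Tx,x⟩_A| : ‖x‖_A = 1}`. -/
def wA (A T : H →L[ℂ] H) : ℝ :=
  sSup {r : ℝ | ∃ x : H, vnormA A x = 1 ∧ r = ‖innA A (T x) x‖}

/-- The `A`-operator seminorm, `sup` over `A`-unit vectors in the closure of the range of `A`. -/
def opNormA (A T : H →L[ℂ] H) : ℝ :=
  sSup {r : ℝ | ∃ x : H, x ∈ closure (Set.range A) ∧ vnormA A x = 1 ∧ r = vnormA A (T x)}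

/-- The `A`-operator seminorm, `sup` over all `A`-unit vectors (used when `A > 0`). -/
def opNormA' (A T : H →L[ℂ] H) : ℝ :=
  sSup {r : ℝ | ∃ x : H, vnormA A x = 1 ∧ r = vnormA A (T x)}

/-- The `A`-Crawford number `c_A(T) = inf{|⟨Tx,x⟩_A| : ‖x‖_A = 1}`. -/
def cA (A T : H →L[ℂ] H) : ℝ :=
  sInf {r : ℝ | ∃ x : H, vnormA A x = 1 ∧ r = ‖innA A (T x) x‖}

/-- The `A`-minimum modulus `m_A(T) = inf{‖Tx‖_A : ‖x‖_A = 1}` (version for `A > 0`). -/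
def mA (A T : H →L[ℂ] H) : ℝ :=
  sInf {r : ℝ | ∃ x : H, vnormA A x = 1 ∧ r = vnormA A (T x)}

/-- `S` is an `A`-adjoint of `T`, i.e. `A S = T* A`. -/
def IsAAdjoint (A T S : H →L[ℂ] H) : Prop :=
  A.comp S = (ContinuousLinearMap.adjoint T).comp A

/-- `A` is strictly positive: positive and `⟨Ax,x⟩ > 0` for all `x ≠ 0`. -/
def StrictPos (A : H →L[ℂ] H) : Prop :=
  A.IsPositive ∧ ∀ x : H, x ≠ 0 → 0 < (innA A x x).re

/-- The inner product on `H ⊕ H`. -/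
def inn2 (u v : H × H) : ℂ := inner ℂ u.1 v.1 + inner ℂ u.2 v.2

/-- `B = diag(A, A)` acting on `H ⊕ H`. -/
def Bop (A : H →L[ℂ] H) : H × H →L[ℂ] H × H := A.prodMap A

/-- The `B`-seminorm on `H ⊕ H`. -/
def vnormB (A : H →L[ℂ] H) (u : H × H) : ℝ := Real.sqrt (inn2 (Bop A u) u).re

/-- The `B`-numerical radius on `H ⊕ H`, where `B = diag(A, A)`. -/
def wB (A : H →L[ℂ] H) (S : H × H →L[ℂ] H × H) : ℝ :=
  sSup {r : ℝ | ∃ u : H × H, vnormB A u = 1 ∧ r = ‖inn2 (Bop A (S u)) u‖}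

/-- The `2 × 2` operator matrix `[[X, Y], [Z, W]]` acting on `H ⊕ H`. -/
def blk (X Y Z W : H →L[ℂ] H) : H × H →L[ℂ] H × H :=
  ((X.comp (ContinuousLinearMap.fst ℂ H H)) + (Y.comp (ContinuousLinearMap.snd ℂ H H))).prod
    ((Z.comp (ContinuousLinearMap.fst ℂ H H)) + (W.comp (ContinuousLinearMap.snd ℂ H H)))

/- Neither supremum is assumed finite: the two sets are bounded together, and otherwise both
`sSup`s are the junk value `0`. -/
theorem Real.sSup_eq_of_forall_exists_le {s t : Set ℝ} (hs : ∀ a ∈ s, 0 ≤ a)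
    (ht : ∀ b ∈ t, 0 ≤ b) (hst : ∀ a ∈ s, ∃ b ∈ t, a ≤ b)
    (hts : BddAbove s → ∀ b ∈ t, b ≤ sSup s) :
    sSup s = sSup t := by
  by_cases hsb : BddAbove s
  · have htb : BddAbove t := ⟨sSup s, hts hsb⟩
    refine le_antisymm (Real.sSup_le (fun a ha => ?_) (Real.sSup_nonneg ht))
      (Real.sSup_le (hts hsb) (Real.sSup_nonneg hs))
    obtain ⟨b, hb, hab⟩ := hst a ha
    exact hab.trans (le_csSup htb hb)
  · have htb : ¬BddAbove t := by
      rintro ⟨M, hM⟩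
      refine hsb ⟨M, fun a ha => ?_⟩
      obtain ⟨b, hb, hab⟩ := hst a ha
      exact hab.trans (hM hb)
    rw [Real.sSup_of_not_bddAbove hsb, Real.sSup_of_not_bddAbove htb]

section SemiInnerProduct

variable {A T : H →L[ℂ] H}

lemma innA_conj_symm (hA : IsSelfAdjoint A) (x y : H) :
    starRingEnd ℂ (innA A y x) = innA A x y := by
  rw [innA, inner_conj_symm, ← hA.adjoint_eq, adjoint_inner_right, hA.adjoint_eq, innA]

lemma norm_innA_le (hA : A.IsPositive) (x y : H) :
    ‖innA A x y‖ ≤ vnormA A x * vnormA A y :=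
  InnerProductSpace.Core.norm_inner_le_norm (𝕜 := ℂ) (c :=
    { inner := innA A
      conj_inner_symm := innA_conj_symm hA.isSelfAdjoint
      re_inner_nonneg := hA.re_inner_nonneg_left
      add_left x y z := by simp only [innA, map_add, inner_add_left]
      smul_left x y c := by simp only [innA, map_smul, inner_smul_left] }) x y

omit [CompleteSpace H] in
lemma vnormA_sq (hA : A.IsPositive) (x : H) : vnormA A x ^ 2 = (innA A x x).re :=
  Real.sq_sqrt (hA.re_inner_nonneg_left x)

omit [CompleteSpace H] in
lemma innA_smul_smul (c : ℂ) (x y : H) :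
    innA A (c • x) (c • y) = Complex.normSq c * innA A x y := by
  simp only [innA, map_smul, inner_smul_left, inner_smul_right]
  rw [← Complex.mul_conj]
  ring

omit [CompleteSpace H] in
lemma vnormA_smul (c : ℂ) (x : H) : vnormA A (c • x) = ‖c‖ * vnormA A x := by
  rw [vnormA, vnormA, innA_smul_smul, Complex.re_ofReal_mul,
    Real.sqrt_mul (Complex.normSq_nonneg c), ← Complex.norm_def]

lemma vnormA_eq_of_apply_eq (hA : IsSelfAdjoint A) {x y : H} (h : A x = A y) :
    vnormA A x = vnormA A y := by
  have key : innA A x x = innA A y y := by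
    rw [← innA_conj_symm hA x x, innA, h, ← innA, innA_conj_symm hA, innA, h, ← innA]
  rw [vnormA, vnormA, key]

omit [CompleteSpace H] in
lemma vnormA_nonneg (x : H) : 0 ≤ vnormA A x := Real.sqrt_nonneg _

omit [CompleteSpace H] in
lemma innA_add_self_add_sub_self_sub (x y : H) :
    (innA A (x + y) (x + y)).re + (innA A (x - y) (x - y)).re
      = 2 * (innA A x x).re + 2 * (innA A y y).re := by
  simp only [innA, map_add, map_sub, inner_add_left, inner_add_right, inner_sub_left,
    inner_sub_right, Complex.add_re, Complex.sub_re]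
  ring

omit [CompleteSpace H] in
lemma innA_apply_add_sub_apply_sub (x y : H) :
    innA A (T (x + y)) (x + y) - innA A (T (x - y)) (x - y)
      = 2 * (innA A (T x) y + innA A (T y) x) := by
  simp only [innA, map_add, map_sub, inner_add_left, inner_add_right, inner_sub_left,
    inner_sub_right]
  ring

end SemiInnerProduct

section AAdjoint

variable {A T S : H →L[ℂ] H}

lemma apply_apply_eq_adjoint_apply_of_isAAdjoint (hA : IsSelfAdjoint A)
    (h : IsAAdjoint A T S) (x : H) : A (T x) = adjoint S (A x) := by
  have h' := congrArg adjoint h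
  rw [adjoint_comp, adjoint_comp, adjoint_adjoint, hA.adjoint_eq] at h'
  exact congr($h'.symm x)

lemma innA_apply_left_of_isSelfAdjoint_comp (hA : IsSelfAdjoint A)
    (hT : IsSelfAdjoint (A ∘L T)) (x y : H) :
    innA A (T x) y = innA A x (T y) := by
  rw [innA, ← comp_apply, ← hT.adjoint_eq, adjoint_inner_left, comp_apply,
    ← hA.adjoint_eq, adjoint_inner_right, hA.adjoint_eq, innA]

lemma exists_mem_closure_range_apply_eq (hA : IsSelfAdjoint A) (x : H) :
    ∃ y ∈ closure (Set.range A), A y = A x := by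
  obtain ⟨y, hy, z, hz, rfl⟩ :=
    A.range.topologicalClosure.exists_add_mem_mem_orthogonal x
  have hAz : A z = 0 := by
    rwa [Submodule.orthogonal_closure, orthogonal_range, hA.adjoint_eq] at hz
  refine ⟨y, ?_, by rw [map_add, hAz, add_zero]⟩
  rwa [← SetLike.mem_coe, Submodule.topologicalClosure_coe, LinearMap.coe_range] at hy

lemma opNormA_eq_opNormA' (hA : IsSelfAdjoint A) (hT : ∃ S, IsAAdjoint A T S) :
    opNormA A T = opNormA' A T := by
  obtain ⟨S, hS⟩ := hT
  unfold opNormA opNormA'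
  congr 1
  ext r
  constructor
  · rintro ⟨x, -, hx, rfl⟩
    exact ⟨x, hx, rfl⟩
  · rintro ⟨x, hx, rfl⟩
    obtain ⟨y, hy, hAy⟩ := exists_mem_closure_range_apply_eq hA x
    have hATy : A (T y) = A (T x) := by
      rw [apply_apply_eq_adjoint_apply_of_isAAdjoint hA hS,
        apply_apply_eq_adjoint_apply_of_isAAdjoint hA hS, hAy]
    exact ⟨y, hy, vnormA_eq_of_apply_eq hA hAy ▸ hx, vnormA_eq_of_apply_eq hA hATy ▸ rfl⟩

end AAdjoint

section Polarization

variable {A T : H →L[ℂ] H}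

lemma norm_innA_apply_self_le (hA : A.IsPositive) {w : ℝ}
    (hw : ∀ z, vnormA A z = 1 → ‖innA A (T z) z‖ ≤ w) (z : H) :
    ‖innA A (T z) z‖ ≤ w * vnormA A z ^ 2 := by
  rcases (vnormA_nonneg (A := A) z).eq_or_lt with hz | hz
  · have hcs := norm_innA_le hA (T z) z
    rw [← hz, mul_zero] at hcs
    rw [← hz]
    simpa using hcs
  · set c : ℂ := (((vnormA A z)⁻¹ : ℝ) : ℂ)
    have hc : ‖c‖ = (vnormA A z)⁻¹ := by
      rw [Complex.norm_real, Real.norm_eq_abs, abs_of_pos (inv_pos.mpr hz)]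
    have hcz : vnormA A (c • z) = 1 := by
      rw [vnormA_smul, hc, inv_mul_cancel₀ hz.ne']
    have h := hw _ hcz
    rw [map_smul, innA_smul_smul, norm_mul, Complex.norm_real, Real.norm_eq_abs,
      abs_of_nonneg (Complex.normSq_nonneg c), Complex.normSq_eq_norm_sq, hc,
      inv_pow, inv_mul_le_iff₀ (pow_pos hz 2)] at h
    linarith

lemma two_mul_re_innA_apply_le (hA : A.IsPositive)
    (hT : ∀ x y, innA A (T x) y = innA A x (T y)) {w : ℝ}
    (hw : ∀ z, ‖innA A (T z) z‖ ≤ w * vnormA A z ^ 2) (x y : H) :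
    2 * (innA A (T x) y).re ≤ w * (vnormA A x ^ 2 + vnormA A y ^ 2) := by
  have hsymm : (innA A (T y) x).re = (innA A (T x) y).re := by
    rw [hT, ← innA_conj_symm hA.isSelfAdjoint, Complex.conj_re]
  have hpolar := congrArg Complex.re (innA_apply_add_sub_apply_sub (A := A) (T := T) x y)
  simp only [Complex.sub_re, Complex.mul_re, Complex.add_re, Complex.re_ofNat,
    Complex.im_ofNat, hsymm, zero_mul, sub_zero] at hpolar
  have hpar := innA_add_self_add_sub_self_sub (A := A) x y
  simp only [← vnormA_sq hA] at hpar
  have hplus := (Complex.re_le_norm _).trans (hw (x + y))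
  have hminus := ((neg_le_abs _).trans (Complex.abs_re_le_norm _)).trans (hw (x - y))
  linear_combination (hplus + hminus - hpolar + w * hpar) / 2

lemma vnormA_apply_le (hA : A.IsPositive) (hT : ∀ x y, innA A (T x) y = innA A x (T y))
    {w : ℝ} (hw : ∀ z, ‖innA A (T z) z‖ ≤ w * vnormA A z ^ 2) {x : H} (hx : vnormA A x = 1) :
    vnormA A (T x) ≤ w := by
  set m := vnormA A (T x)
  rcases (vnormA_nonneg (A := A) (T x)).eq_or_lt with hm0 | hm
  · have h := (norm_nonneg _).trans (hw x)
    rw [hx] at h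
    linarith
  · have hm' : ‖((m⁻¹ : ℝ) : ℂ)‖ = m⁻¹ := by
      rw [Complex.norm_real, Real.norm_eq_abs, abs_of_pos (inv_pos.mpr hm)]
    set y : H := ((m⁻¹ : ℝ) : ℂ) • T x
    have hy : vnormA A y = 1 := by
      rw [vnormA_smul, hm', inv_mul_cancel₀ hm.ne']
    have hre : (innA A (T x) y).re = m := by
      rw [innA, inner_smul_right, ← innA, Complex.re_ofReal_mul, ← vnormA_sq hA]
      change m⁻¹ * m ^ 2 = m
      field_simp
    have h := two_mul_re_innA_apply_le hA hT hw x y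
    rw [hre, hx, hy] at h
    linarith

theorem wA_eq_opNormA' (hA : A.IsPositive) (hT : ∀ x y, innA A (T x) y = innA A x (T y)) :
    wA A T = opNormA' A T := by
  refine Real.sSup_eq_of_forall_exists_le ?_ ?_ ?_ ?_
  · rintro _ ⟨x, -, rfl⟩
    exact norm_nonneg _
  · rintro _ ⟨x, -, rfl⟩
    exact vnormA_nonneg _
  · rintro _ ⟨x, hx, rfl⟩
    refine ⟨_, ⟨x, hx, rfl⟩, ?_⟩
    simpa [hx] using norm_innA_le hA (T x) x
  · rintro hbdd _ ⟨x, hx, rfl⟩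
    exact vnormA_apply_le hA hT
      (norm_innA_apply_self_le hA fun z hz => le_csSup hbdd ⟨z, hz, rfl⟩) hx

end Polarization

theorem stmt0 (A T : H →L[ℂ] H) (hA : A.IsPositive)
    (hT : ∃ S, IsAAdjoint A T S) (hsa : IsSelfAdjoint (A.comp T)) :
    wA A T = opNormA A T := by
  rw [opNormA_eq_opNormA' hA.isSelfAdjoint hT]
  exact wA_eq_opNormA' hA (innA_apply_left_of_isSelfAdjoint_comp hA.isSelfAdjoint hsa)
end
end

section
/- Let A be a positive operator on H, B = diag(A,A) on H ⊕ H, and X, Y ∈ B_A(H). Then the B-numerical radius of the diagonal operator matrix diag(X,Y) equals max{w_A(X), w_A(Y)}. -/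
noncomputable section
open Complex ContinuousLinearMap

variable {H : Type*} [NormedAddCommGroup H] [InnerProductSpace ℂ H] [CompleteSpace H]

/-!
Write `R = √A`, so that `⟨x, y⟩_A = ⟨R x, R y⟩` and Cauchy–Schwarz is available for the
`A`-semi-inner product. If `S` is an `A`-adjoint of `T`, then `D = S T` is symmetric for
`⟨·, ·⟩_A`, and the power trick `‖R Dᵐ x‖² ≤ ‖R D²ᵐ x‖ ‖R x‖` gives `‖R D x‖ ≤ ‖D‖ ‖R x‖`;
hence `‖R T x‖² = ⟨D x, x⟩_A ≤ ‖D‖ ‖R x‖²`. So `w_A(T)` is a supremum of a bounded set (an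
unbounded one would give the junk value `sSup = 0`), and by homogeneity
`|⟨T x, x⟩_A| ≤ w_A(T) ‖x‖_A²` for all `x`, also when `‖x‖_A = 0`. For `u = (x, y)` this bounds
`|⟨X x, x⟩_A + ⟨Y y, y⟩_A|` by `max (w_A X) (w_A Y) · ‖u‖_B²`; the vectors `(x, 0)` and `(0, y)`
give the reverse inequality.
-/

open scoped InnerProductSpace ComplexConjugate

lemma le_of_forall_pow_two_pow_mul_le {x y a K : ℝ} (hy : 0 ≤ y) (ha : 0 < a)
    (h : ∀ n : ℕ, x ^ 2 ^ n * a ≤ K * y ^ 2 ^ n) : x ≤ y := by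
  by_contra! hyx
  have hx : 0 < x := hy.trans_lt hyx
  have hlim : Filter.Tendsto (fun n : ℕ => K * (y / x) ^ 2 ^ n) Filter.atTop (nhds 0) := by
    simpa using ((tendsto_pow_atTop_nhds_zero_of_lt_one (div_nonneg hy hx.le)
      ((div_lt_one hx).2 hyx)).comp (tendsto_pow_atTop_atTop_of_one_lt one_lt_two)).const_mul K
  refine ha.not_ge (ge_of_tendsto' hlim fun n => ?_)
  rw [div_pow, ← mul_div_assoc, le_div_iff₀ (by positivity), mul_comm]
  exact h n

lemma le_mul_of_sq_le_mul_two_mul {s : ℕ → ℝ} {c K : ℝ} (hs : ∀ m, 0 ≤ s m) (hc : 0 ≤ c)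
    (hsq : ∀ m, s m ^ 2 ≤ s (2 * m) * s 0) (hK : ∀ m, s m ≤ K * c ^ m) : s 1 ≤ c * s 0 := by
  rcases (hs 0).eq_or_lt with h0 | h0
  · have h1 := hsq 1
    rw [← h0, mul_zero] at h1 ⊢
    exact (pow_eq_zero_iff two_ne_zero).1 (le_antisymm h1 (sq_nonneg _)) |>.le
  have hiter : ∀ n : ℕ, s 1 ^ 2 ^ n * s 0 ≤ s (2 ^ n) * s 0 ^ 2 ^ n := by
    intro n
    induction n with
    | zero => simp [mul_comm]
    | succ n ih =>
      refine le_of_mul_le_mul_right ?_ h0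
      calc s 1 ^ 2 ^ (n + 1) * s 0 * s 0 = (s 1 ^ 2 ^ n * s 0) ^ 2 := by ring
        _ ≤ (s (2 ^ n) * s 0 ^ 2 ^ n) ^ 2 :=
            pow_le_pow_left₀ (mul_nonneg (pow_nonneg (hs 1) _) h0.le) ih 2
        _ = s (2 ^ n) ^ 2 * s 0 ^ 2 ^ (n + 1) := by ring
        _ ≤ s (2 * 2 ^ n) * s 0 * s 0 ^ 2 ^ (n + 1) := by gcongr; exact hsq _
        _ = s (2 ^ (n + 1)) * s 0 ^ 2 ^ (n + 1) * s 0 := by rw [pow_succ']; ring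
  refine le_of_forall_pow_two_pow_mul_le (K := K) (mul_nonneg hc h0.le) h0 fun n => ?_
  calc s 1 ^ 2 ^ n * s 0 ≤ s (2 ^ n) * s 0 ^ 2 ^ n := hiter n
    _ ≤ K * c ^ 2 ^ n * s 0 ^ 2 ^ n := by gcongr; exact hK _
    _ = K * (c * s 0) ^ 2 ^ n := by ring

section

variable {A : H →L[ℂ] H}

lemma inner_sqrt_apply_sqrt_apply (hA : A.IsPositive) (x y : H) :
    ⟪CFC.sqrt A x, CFC.sqrt A y⟫_ℂ = innA A x y := by
  have hsa : IsSelfAdjoint (CFC.sqrt A) := (CFC.sqrt_nonneg A).isSelfAdjoint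
  rw [← adjoint_inner_left, isSelfAdjoint_iff'.mp hsa, ← mul_apply_eq_comp,
    CFC.sqrt_mul_sqrt_self A ((nonneg_iff_isPositive A).2 hA), innA]

lemma re_innA_self (hA : A.IsPositive) (x : H) : (innA A x x).re = ‖CFC.sqrt A x‖ ^ 2 := by
  rw [← inner_sqrt_apply_sqrt_apply hA]
  exact inner_self_eq_norm_sq (𝕜 := ℂ) _

lemma vnormA_eq_norm_sqrt_apply (hA : A.IsPositive) (x : H) : vnormA A x = ‖CFC.sqrt A x‖ := by
  rw [vnormA, re_innA_self hA, Real.sqrt_sq (norm_nonneg _)]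

lemma conj_innA (hA : A.IsPositive) (x y : H) : conj (innA A y x) = innA A x y := by
  rw [← inner_sqrt_apply_sqrt_apply hA, ← inner_sqrt_apply_sqrt_apply hA, inner_conj_symm]

lemma IsAAdjoint.innA_apply_left {T S : H →L[ℂ] H} (h : IsAAdjoint A T S) (x y : H) :
    innA A (S x) y = innA A x (T y) := by
  rw [innA, ← comp_apply, h, comp_apply, adjoint_inner_left, innA]

lemma norm_sqrt_apply_le_of_innA_symm (hA : A.IsPositive) {D : H →L[ℂ] H}
    (hD : ∀ x y, innA A (D x) y = innA A x (D y)) (x : H) :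
    ‖CFC.sqrt A (D x)‖ ≤ ‖D‖ * ‖CFC.sqrt A x‖ := by
  have hDpow : ∀ m x y, innA A ((D ^ m) x) y = innA A x ((D ^ m) y) := by
    intro m
    induction m with
    | zero => exact fun _ _ => rfl
    | succ m ih =>
      intro x y
      rw [pow_succ', mul_apply_eq_comp, hD, ih, ← mul_apply_eq_comp, ← pow_succ, pow_succ']
  set s : ℕ → ℝ := fun m => ‖CFC.sqrt A ((D ^ m) x)‖ with hs
  have hsq : ∀ m, s m ^ 2 ≤ s (2 * m) * s 0 := by
    intro m
    calc s m ^ 2 = (innA A ((D ^ m) x) ((D ^ m) x)).re := (re_innA_self hA _).symm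
      _ = (innA A ((D ^ (2 * m)) x) x).re := by
          rw [← hDpow, ← mul_apply_eq_comp, ← pow_add, two_mul]
      _ ≤ ‖innA A ((D ^ (2 * m)) x) x‖ := Complex.re_le_norm _
      _ ≤ s (2 * m) * s 0 := by
          rw [← inner_sqrt_apply_sqrt_apply hA]
          simpa [hs] using norm_inner_le_norm (𝕜 := ℂ) _ _
  have hK : ∀ m, s m ≤ ‖CFC.sqrt A‖ * ‖x‖ * ‖D‖ ^ m := by
    intro m
    rcases m.eq_zero_or_pos with rfl | hm
    · simpa [hs] using le_opNorm (CFC.sqrt A) x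
    calc s m ≤ ‖CFC.sqrt A‖ * (‖D ^ m‖ * ‖x‖) := le_opNorm_of_le _ (le_opNorm _ _)
      _ ≤ ‖CFC.sqrt A‖ * (‖D‖ ^ m * ‖x‖) := by gcongr; exact norm_pow_le' D hm
      _ = ‖CFC.sqrt A‖ * ‖x‖ * ‖D‖ ^ m := by ring
  simpa [hs] using le_mul_of_sq_le_mul_two_mul (fun m => norm_nonneg _) (norm_nonneg D) hsq hK

lemma norm_sqrt_apply_le_of_isAAdjoint (hA : A.IsPositive) {T S : H →L[ℂ] H}
    (h : IsAAdjoint A T S) (x : H) :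
    ‖CFC.sqrt A (T x)‖ ≤ √‖S ∘L T‖ * ‖CFC.sqrt A x‖ := by
  have hsymm : ∀ x y, innA A ((S ∘L T) x) y = innA A x ((S ∘L T) y) := by
    intro x y
    rw [comp_apply, comp_apply, h.innA_apply_left, ← conj_innA hA x, h.innA_apply_left,
      conj_innA hA]
  have hsq : ‖CFC.sqrt A (T x)‖ ^ 2 ≤ ‖S ∘L T‖ * ‖CFC.sqrt A x‖ ^ 2 :=
    calc ‖CFC.sqrt A (T x)‖ ^ 2 = (innA A ((S ∘L T) x) x).re := by
          rw [comp_apply, h.innA_apply_left, re_innA_self hA]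
      _ ≤ ‖CFC.sqrt A ((S ∘L T) x)‖ * ‖CFC.sqrt A x‖ := by
          rw [← inner_sqrt_apply_sqrt_apply hA]
          exact (Complex.re_le_norm _).trans (norm_inner_le_norm _ _)
      _ ≤ ‖S ∘L T‖ * ‖CFC.sqrt A x‖ * ‖CFC.sqrt A x‖ := by
          gcongr
          exact norm_sqrt_apply_le_of_innA_symm hA hsymm x
      _ = ‖S ∘L T‖ * ‖CFC.sqrt A x‖ ^ 2 := by ring
  rwa [← pow_le_pow_iff_left₀ (norm_nonneg _) (by positivity) two_ne_zero, mul_pow,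
    Real.sq_sqrt (norm_nonneg _)]

lemma norm_innA_le_wA_mul (hA : A.IsPositive) {T : H →L[ℂ] H} {C : ℝ}
    (hT : ∀ x, ‖CFC.sqrt A (T x)‖ ≤ C * ‖CFC.sqrt A x‖) (x : H) :
    ‖innA A (T x) x‖ ≤ wA A T * ‖CFC.sqrt A x‖ ^ 2 := by
  have hCS : ∀ y, ‖innA A (T y) y‖ ≤ C * ‖CFC.sqrt A y‖ ^ 2 := fun y =>
    calc ‖innA A (T y) y‖ ≤ ‖CFC.sqrt A (T y)‖ * ‖CFC.sqrt A y‖ := by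
          rw [← inner_sqrt_apply_sqrt_apply hA]
          exact norm_inner_le_norm _ _
      _ ≤ C * ‖CFC.sqrt A y‖ * ‖CFC.sqrt A y‖ := by gcongr; exact hT y
      _ = C * ‖CFC.sqrt A y‖ ^ 2 := by ring
  rcases (norm_nonneg (CFC.sqrt A x)).eq_or_lt with h0 | hpos
  · simpa [← h0] using hCS x
  set t := ‖CFC.sqrt A x‖
  have hbdd : BddAbove {r : ℝ | ∃ y : H, vnormA A y = 1 ∧ r = ‖innA A (T y) y‖} := by
    refine ⟨C, ?_⟩
    rintro _ ⟨y, hy, rfl⟩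
    simpa [← vnormA_eq_norm_sqrt_apply hA, hy] using hCS y
  have hunit : vnormA A ((t⁻¹ : ℂ) • x) = 1 := by
    rw [vnormA_eq_norm_sqrt_apply hA, map_smul, norm_smul, norm_inv, Complex.norm_real,
      Real.norm_of_nonneg hpos.le]
    exact inv_mul_cancel₀ hpos.ne'
  have hscaled := le_csSup hbdd ⟨_, hunit, rfl⟩
  have hsmul : ‖innA A (T ((t⁻¹ : ℂ) • x)) ((t⁻¹ : ℂ) • x)‖ = (t ^ 2)⁻¹ * ‖innA A (T x) x‖ := by
    simp [innA, abs_of_pos hpos]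
    ring
  rwa [hsmul, inv_mul_le_iff₀ (by positivity), mul_comm] at hscaled

lemma vnormB_eq (hA : A.IsPositive) (u : H × H) :
    vnormB A u = √(‖CFC.sqrt A u.1‖ ^ 2 + ‖CFC.sqrt A u.2‖ ^ 2) := by
  rw [vnormB, ← re_innA_self hA, ← re_innA_self hA, ← Complex.add_re]
  rfl

end

theorem stmt3 (A X Y : H →L[ℂ] H) (hA : A.IsPositive)
    (hX : ∃ S, IsAAdjoint A X S) (hY : ∃ S, IsAAdjoint A Y S) :
    wB A (blk X 0 0 Y) = max (wA A X) (wA A Y) := by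
  obtain ⟨S, hS⟩ := hX
  obtain ⟨S', hS'⟩ := hY
  have hXw := norm_innA_le_wA_mul hA (norm_sqrt_apply_le_of_isAAdjoint hA hS)
  have hYw := norm_innA_le_wA_mul hA (norm_sqrt_apply_le_of_isAAdjoint hA hS')
  have hdiag : ∀ u : H × H,
      inn2 (Bop A (blk X 0 0 Y u)) u = innA A (X u.1) u.1 + innA A (Y u.2) u.2 := fun u => by
    simp [inn2, Bop, blk, innA]
  set M := max (wA A X) (wA A Y)
  have hB : ∀ r ∈ {r : ℝ | ∃ u : H × H, vnormB A u = 1 ∧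
      r = ‖inn2 (Bop A (blk X 0 0 Y u)) u‖}, r ≤ M := by
    rintro _ ⟨u, hu, rfl⟩
    rw [vnormB_eq hA, Real.sqrt_eq_one] at hu
    calc ‖inn2 (Bop A (blk X 0 0 Y u)) u‖
        ≤ ‖innA A (X u.1) u.1‖ + ‖innA A (Y u.2) u.2‖ := hdiag u ▸ norm_add_le _ _
      _ ≤ wA A X * ‖CFC.sqrt A u.1‖ ^ 2 + wA A Y * ‖CFC.sqrt A u.2‖ ^ 2 :=
          add_le_add (hXw _) (hYw _)
      _ ≤ M * ‖CFC.sqrt A u.1‖ ^ 2 + M * ‖CFC.sqrt A u.2‖ ^ 2 := by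
          gcongr
          exacts [le_max_left _ _, le_max_right _ _]
      _ = M := by rw [← mul_add, hu, mul_one]
  have hwB : 0 ≤ wB A (blk X 0 0 Y) :=
    Real.sSup_nonneg (by rintro _ ⟨u, -, rfl⟩; exact norm_nonneg _)
  have hwX : 0 ≤ wA A X := Real.sSup_nonneg (by rintro _ ⟨x, -, rfl⟩; exact norm_nonneg _)
  refine le_antisymm (Real.sSup_le hB (le_max_of_le_left hwX)) (max_le ?_ ?_)
  · refine Real.sSup_le ?_ hwB
    rintro _ ⟨x, hx, rfl⟩
    rw [vnormA_eq_norm_sqrt_apply hA] at hx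
    exact le_csSup ⟨M, hB⟩ ⟨(x, 0), by simp [vnormB_eq hA, hx], by simp [hdiag, innA]⟩
  · refine Real.sSup_le ?_ hwB
    rintro _ ⟨y, hy, rfl⟩
    rw [vnormA_eq_norm_sqrt_apply hA] at hy
    exact le_csSup ⟨M, hB⟩ ⟨(0, y), by simp [vnormB_eq hA, hy], by simp [hdiag, innA]⟩
end
end

section
/- Let A be a strictly positive operator on H, B = diag(A,A), and X, Y ∈ B_A(H). Then w_B of the anti-diagonal operator matrix [[0,X],[Y,0]] equals w_B of [[0,Y],[X,0]]. -/
noncomputable section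
open Complex ContinuousLinearMap

variable {H : Type*} [NormedAddCommGroup H] [InnerProductSpace ℂ H] [CompleteSpace H]

/-! The coordinate swap `(x, y) ↦ (y, x)` is a `B`-isometry conjugating `[[X, Y], [Z, W]]` into
`[[W, Z], [Y, X]]`, so both operator matrices have the same `B`-numerical radius. -/

section

omit [CompleteSpace H]

theorem inn2_swap (u v : H × H) : inn2 u.swap v.swap = inn2 u v :=
  add_comm _ _

theorem Bop_swap (A : H →L[ℂ] H) (u : H × H) : Bop A u.swap = (Bop A u).swap :=
  rfl

theorem vnormB_swap (A : H →L[ℂ] H) (u : H × H) : vnormB A u.swap = vnormB A u := by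
  rw [vnormB, Bop_swap, inn2_swap, vnormB]

theorem blk_apply_swap (X Y Z W : H →L[ℂ] H) (u : H × H) :
    blk X Y Z W u.swap = (blk W Z Y X u).swap := by
  simp only [blk, Prod.swap, prod_apply, add_apply, coe_comp, Function.comp_apply, coe_fst',
    coe_snd']
  exact Prod.ext (add_comm _ _) (add_comm _ _)

theorem wB_set_subset_of_swap (A : H →L[ℂ] H) {S T : H × H →L[ℂ] H × H}
    (h : ∀ u, T u.swap = (S u).swap) :
    {r : ℝ | ∃ u : H × H, vnormB A u = 1 ∧ r = ‖inn2 (Bop A (S u)) u‖} ⊆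
      {r : ℝ | ∃ u : H × H, vnormB A u = 1 ∧ r = ‖inn2 (Bop A (T u)) u‖} := by
  rintro _ ⟨u, hu, rfl⟩
  exact ⟨u.swap, by rwa [vnormB_swap], by rw [h, Bop_swap, inn2_swap]⟩

theorem wB_blk_swap (A X Y Z W : H →L[ℂ] H) : wB A (blk X Y Z W) = wB A (blk W Z Y X) :=
  congrArg sSup <| (wB_set_subset_of_swap A (blk_apply_swap W Z Y X)).antisymm
    (wB_set_subset_of_swap A (blk_apply_swap X Y Z W))

end

theorem stmt4_general (A X Y : H →L[ℂ] H) :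
    wB A (blk 0 X Y 0) = wB A (blk 0 Y X 0) :=
  wB_blk_swap A 0 X Y 0

theorem stmt4 (A X Y : H →L[ℂ] H) (hA : StrictPos A)
    (hX : ∃ S, IsAAdjoint A X S) (hY : ∃ S, IsAAdjoint A Y S) :
    wB A (blk 0 X Y 0) = wB A (blk 0 Y X 0) :=
  stmt4_general A X Y
end
end

section
/- Let A be a strictly positive operator on H, B = diag(A,A), X, Y ∈ B_A(H), and θ ∈ ℝ. Then w_B([[0, X],[e^{iθ}Y, 0]]) = w_B([[0, X],[Y, 0]]). -/
noncomputable section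
open Complex ContinuousLinearMap

variable {H : Type*} [NormedAddCommGroup H] [InnerProductSpace ℂ H] [CompleteSpace H]

/-! Choose `μ` with `|μ| = 1` and `μ² = e^{iθ}`. The unitary `U = diag(1, μ)` commutes with `B`
and `U* [[0, X], [μ² Y, 0]] U = μ [[0, X], [Y, 0]]`, so the `B`-numerical ranges of the two
operators differ by a unimodular factor and have the same radius. -/

theorem wB_eq_of_surjective {A : H →L[ℂ] H} {S T : H × H →L[ℂ] H × H}
    {φ : H × H → H × H} (hφ : Function.Surjective φ)
    (hnorm : ∀ u, vnormB A (φ u) = vnormB A u)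
    (hform : ∀ u, ‖inn2 (Bop A (S (φ u))) (φ u)‖ = ‖inn2 (Bop A (T u)) u‖) :
    wB A S = wB A T := by
  unfold wB
  congr 1
  ext r
  constructor
  · rintro ⟨v, hv, rfl⟩
    obtain ⟨u, rfl⟩ := hφ v
    exact ⟨u, (hnorm u) ▸ hv, hform u⟩
  · rintro ⟨u, hu, rfl⟩
    exact ⟨φ u, (hnorm u).symm ▸ hu, (hform u).symm⟩

theorem blk_zero_zero_apply (X Z : H →L[ℂ] H) (u : H × H) :
    blk 0 X Z 0 u = (X u.2, Z u.1) := by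
  simp [blk]

theorem Bop_apply (A : H →L[ℂ] H) (u : H × H) : Bop A u = (A u.1, A u.2) := rfl

theorem inn2_Bop_self_smul_snd (A : H →L[ℂ] H) {μ : ℂ} (hμ : ‖μ‖ = 1) (a b : H) :
    inn2 (Bop A (a, μ • b)) (a, μ • b) = inn2 (Bop A (a, b)) (a, b) := by
  have hμμ : (starRingEnd ℂ) μ * μ = 1 := by
    rw [Complex.conj_mul', hμ]; norm_num
  simp only [Bop_apply, inn2, map_smul, inner_smul_left, inner_smul_right]
  linear_combination inner ℂ (A b) b * hμμ

theorem vnormB_smul_snd (A : H →L[ℂ] H) {μ : ℂ} (hμ : ‖μ‖ = 1) (a b : H) :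
    vnormB A (a, μ • b) = vnormB A (a, b) := by
  rw [vnormB, vnormB, inn2_Bop_self_smul_snd A hμ]

theorem inn2_Bop_blk_sq_smul (A X Y : H →L[ℂ] H) {μ : ℂ} (hμ : ‖μ‖ = 1) (a b : H) :
    inn2 (Bop A (blk 0 X (μ ^ 2 • Y) 0 (a, μ • b))) (a, μ • b)
      = (starRingEnd ℂ) μ * inn2 (Bop A (blk 0 X Y 0 (a, b))) (a, b) := by
  have hμμ : (starRingEnd ℂ) μ * μ = 1 := by
    rw [Complex.conj_mul', hμ]; norm_num
  simp only [blk_zero_zero_apply, Bop_apply, inn2, smul_apply, map_smul,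
    inner_smul_left, inner_smul_right, map_pow]
  linear_combination (starRingEnd ℂ) μ * inner ℂ (A (Y a)) b * hμμ

theorem wB_blk_sq_smul (A X Y : H →L[ℂ] H) {μ : ℂ} (hμ : ‖μ‖ = 1) :
    wB A (blk 0 X (μ ^ 2 • Y) 0) = wB A (blk 0 X Y 0) := by
  have hμ0 : μ ≠ 0 := by rintro rfl; simp at hμ
  refine wB_eq_of_surjective (φ := fun u => (u.1, μ • u.2)) ?_ ?_ ?_
  · rintro ⟨a, b⟩
    exact ⟨(a, μ⁻¹ • b), by simp [smul_smul, hμ0]⟩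
  · rintro ⟨a, b⟩
    exact vnormB_smul_snd A hμ a b
  · rintro ⟨a, b⟩
    rw [inn2_Bop_blk_sq_smul A X Y hμ, norm_mul, Complex.norm_conj, hμ, one_mul]

theorem stmt5_general (A X Y : H →L[ℂ] H) (θ : ℝ) :
    wB A (blk 0 X (Complex.exp ((θ : ℝ) * Complex.I) • Y) 0) = wB A (blk 0 X Y 0) := by
  have hsq : Complex.exp ((θ : ℝ) * Complex.I)
      = Complex.exp (((θ / 2 : ℝ) : ℂ) * Complex.I) ^ 2 := by
    rw [← Complex.exp_nat_mul]; push_cast; ring_nf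
  rw [hsq]
  exact wB_blk_sq_smul A X Y (Complex.norm_exp_ofReal_mul_I _)

theorem stmt5 (A X Y : H →L[ℂ] H) (hA : StrictPos A)
    (hX : ∃ S, IsAAdjoint A X S) (hY : ∃ S, IsAAdjoint A Y S) (θ : ℝ) :
    wB A (blk 0 X (Complex.exp ((θ : ℝ) * Complex.I) • Y) 0) = wB A (blk 0 X Y 0) :=
  stmt5_general A X Y θ
end
end

section
/- Let A be a positive operator on H, B = diag(A,A), and X, Y ∈ B_A(H). Then w_B([[0,X],[Y,0]])² ≥ (1/4)·max{‖XX^{♯A} + Y^{♯A}Y‖_A, ‖X^{♯A}X + YY^{♯A}‖_A}. -/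
/-!
In the semi-inner product space `(H ⊕ H, ⟨B u, v⟩)` the operator `T = [[0, X], [Y, 0]]` has the
adjoint `T' = [[0, Y'], [X', 0]]`, and `T'T + TT' = diag(XX' + Y'Y, X'X + YY')`. Kittaneh's
inequality `‖T'T + TT'‖ ≤ 4 w(T)²` holds in every semi-inner product space: the symmetric
operators `T + T'` and `i (T - T')` are bounded by `2 w(T)` by polarization, and the parallelogram
law turns this into `‖Tx‖² + ‖T'x‖² ≤ 4 w(T)² ‖x‖²`. Evaluating the diagonal operator at `(x, 0)`
and `(0, x)` bounds both diagonal entries.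

The supremum defining `w_B(T)` must be shown finite, or it is the junk value `0`. For the
symmetric `S = T'T` and a unit vector `x`, `‖S x‖ ^ 2 ^ n ≤ ‖S ^ 2 ^ n x‖`, and the right-hand side
grows at most like `‖S‖ ^ 2 ^ n`, so `‖T x‖² ≤ ‖S x‖ ≤ ‖S‖`.
-/

noncomputable section
open Complex ContinuousLinearMap

variable {H : Type*} [NormedAddCommGroup H] [InnerProductSpace ℂ H] [CompleteSpace H]

open ComplexConjugate

theorem le_of_forall_pow_two_pow_le_mul_pow {a C K : ℝ} (hK : 0 ≤ K)
    (h : ∀ n : ℕ, a ^ 2 ^ n ≤ C * K ^ 2 ^ n) : a ≤ K := by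
  by_contra! hKa
  have ha : 0 < a := hK.trans_lt hKa
  have hC : 0 < C := by
    have h0 := h 0
    simp only [pow_zero, pow_one] at h0
    exact pos_of_mul_pos_left (ha.trans_le h0) hK
  have hratio : K / a < 1 := (div_lt_one ha).mpr hKa
  obtain ⟨m, hm⟩ := exists_pow_lt_of_lt_one (inv_pos.mpr hC) hratio
  have hsmall : K ^ 2 ^ m < C⁻¹ * a ^ 2 ^ m := by
    have := (pow_le_pow_of_le_one (by positivity) hratio.le Nat.lt_two_pow_self.le).trans_lt hm
    rwa [div_pow, div_lt_iff₀ (by positivity)] at this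
  refine (h m).not_gt ?_
  calc C * K ^ 2 ^ m < C * (C⁻¹ * a ^ 2 ^ m) := by gcongr
    _ = a ^ 2 ^ m := by field_simp

section SemiInnerProductSpace

variable {𝕜 E : Type*} [RCLike 𝕜] [SeminormedAddCommGroup E] [InnerProductSpace 𝕜 E]

local notation "⟪" x ", " y "⟫" => inner 𝕜 x y

theorem norm_le_of_forall_re_inner_le {z : E} {M : ℝ} (hM : 0 ≤ M)
    (h : ∀ y, RCLike.re ⟪z, y⟫ ≤ M * ‖y‖) : ‖z‖ ≤ M := by
  rcases (norm_nonneg z).eq_or_lt with hz | hz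
  · rw [← hz]; exact hM
  · have := h z
    rw [inner_self_eq_norm_sq] at this
    nlinarith

namespace LinearMap

def numRadius (T : E →ₗ[𝕜] E) : ℝ :=
  sSup {r | ∃ z, ‖z‖ = 1 ∧ r = ‖⟪T z, z⟫‖}

theorem numRadius_nonneg (T : E →ₗ[𝕜] E) : 0 ≤ T.numRadius :=
  Real.sSup_nonneg fun _ ⟨_, _, hr⟩ => hr ▸ norm_nonneg _

theorem norm_inner_apply_self_le_numRadius_mul {T : E →ₗ[𝕜] E}
    (hT : BddAbove {r | ∃ z, ‖z‖ = 1 ∧ r = ‖⟪T z, z⟫‖}) (z : E) :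
    ‖⟪T z, z⟫‖ ≤ T.numRadius * ‖z‖ ^ 2 := by
  rcases (norm_nonneg z).eq_or_lt with hz | hz
  · have := norm_inner_le_norm (𝕜 := 𝕜) (T z) z
    rw [← hz, mul_zero] at this
    rw [← hz]; simpa using this
  have hunit : ‖((‖z‖⁻¹ : ℝ) : 𝕜) • z‖ = 1 := by
    rw [norm_smul, norm_algebraMap', norm_inv, norm_norm, inv_mul_cancel₀ hz.ne']
  have := le_csSup hT ⟨_, hunit, rfl⟩
  rw [map_smul, inner_smul_left, inner_smul_right, RCLike.conj_ofReal, ← mul_assoc, norm_mul,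
    ← RCLike.ofReal_mul, norm_algebraMap', Real.norm_of_nonneg (by positivity)] at this
  calc ‖⟪T z, z⟫‖ = ‖z‖⁻¹ * ‖z‖⁻¹ * ‖⟪T z, z⟫‖ * ‖z‖ ^ 2 := by field_simp
    _ ≤ T.numRadius * ‖z‖ ^ 2 := by gcongr; exact this

namespace IsSymmetric

variable {S : E →ₗ[𝕜] E}

theorem sq_norm_apply_le (hS : S.IsSymmetric) (x : E) : ‖S x‖ ^ 2 ≤ ‖x‖ * ‖S (S x)‖ := by
  rw [← inner_self_eq_norm_sq (𝕜 := 𝕜), hS]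
  exact (RCLike.re_le_norm _).trans (norm_inner_le_norm _ _)

theorem norm_apply_le_of_norm_pow_apply_le (hS : S.IsSymmetric) {x : E} (hx : ‖x‖ = 1)
    {C K : ℝ} (hK : 0 ≤ K) (h : ∀ n, ‖(S ^ n) x‖ ≤ C * K ^ n) : ‖S x‖ ≤ K := by
  have iterate : ∀ n : ℕ, ‖S x‖ ^ 2 ^ n ≤ ‖(S ^ 2 ^ n) x‖ := by
    intro n
    induction n with
    | zero => simp
    | succ n ih =>
      calc ‖S x‖ ^ 2 ^ (n + 1) = (‖S x‖ ^ 2 ^ n) ^ 2 := by rw [pow_succ, pow_mul]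
        _ ≤ ‖(S ^ 2 ^ n) x‖ ^ 2 := by gcongr
        _ ≤ ‖x‖ * ‖(S ^ 2 ^ n) ((S ^ 2 ^ n) x)‖ := (hS.pow _).sq_norm_apply_le x
        _ = ‖(S ^ 2 ^ (n + 1)) x‖ := by
          rw [hx, one_mul, ← Module.End.mul_apply, ← pow_add, ← two_mul, pow_succ']
  exact le_of_forall_pow_two_pow_le_mul_pow hK fun n => (iterate n).trans (h _)

theorem norm_apply_le_of_abs_re_inner_le (hS : S.IsSymmetric) {c : ℝ} (hc : 0 ≤ c)
    (h : ∀ z, |RCLike.re ⟪S z, z⟫| ≤ c * ‖z‖ ^ 2) (x : E) : ‖S x‖ ≤ c * ‖x‖ := by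
  have polar : ∀ y, 2 * RCLike.re ⟪S x, y⟫ ≤ c * (‖x‖ ^ 2 + ‖y‖ ^ 2) := by
    intro y
    have hsymm : RCLike.re ⟪S y, x⟫ = RCLike.re ⟪S x, y⟫ := by
      rw [hS, ← inner_conj_symm, RCLike.conj_re]
    have hplus := (abs_le.mp (h (x + y))).2
    have hminus := (abs_le.mp (h (x - y))).1
    have hpar := parallelogram_law_with_norm 𝕜 x y
    simp only [map_add, map_sub, inner_add_left, inner_add_right, inner_sub_left,
      inner_sub_right] at hplus hminus
    nlinarith
  rcases (norm_nonneg x).eq_or_lt with hx | hx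
  · have := hS.sq_norm_apply_le x
    rw [← hx, zero_mul] at this
    rw [← hx, mul_zero]
    nlinarith [norm_nonneg (S x)]
  rcases (norm_nonneg (S x)).eq_or_lt with hSx | hSx
  · rw [← hSx]; positivity
  have key := polar (((‖x‖ / ‖S x‖ : ℝ) : 𝕜) • S x)
  rw [inner_smul_right, RCLike.re_ofReal_mul, inner_self_eq_norm_sq, norm_smul, norm_algebraMap',
    Real.norm_of_nonneg (by positivity), div_mul_cancel₀ _ hSx.ne', div_mul_eq_mul_div, sq,
    ← mul_assoc, mul_div_cancel_right₀ _ hSx.ne'] at key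
  exact le_of_mul_le_mul_left (by nlinarith) hx

end IsSymmetric

end LinearMap

variable {T T' : E →ₗ[𝕜] E}

theorem inner_adjoint_apply_left (hT : ∀ x y, ⟪T x, y⟫ = ⟪x, T' y⟫) (x y : E) :
    ⟪T' x, y⟫ = ⟪x, T y⟫ := by
  rw [← inner_conj_symm, ← hT, inner_conj_symm]

theorem isSymmetric_adjoint_mul (hT : ∀ x y, ⟪T x, y⟫ = ⟪x, T' y⟫) :
    (T' * T).IsSymmetric := fun x y => by
  rw [Module.End.mul_apply, Module.End.mul_apply, inner_adjoint_apply_left hT, hT]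

theorem bddAbove_norm_inner_apply_self (hT : ∀ x y, ⟪T x, y⟫ = ⟪x, T' y⟫) {K : ℝ} (hK : 0 ≤ K)
    {C : E → ℝ} (h : ∀ x n, ‖((T' * T) ^ n) x‖ ≤ C x * K ^ n) :
    BddAbove {r | ∃ z, ‖z‖ = 1 ∧ r = ‖⟪T z, z⟫‖} := by
  refine ⟨√K, ?_⟩
  rintro r ⟨z, hz, rfl⟩
  have hTz : ‖T z‖ ^ 2 ≤ K := by
    calc ‖T z‖ ^ 2 = RCLike.re ⟪z, (T' * T) z⟫ := by
          rw [Module.End.mul_apply, ← hT, inner_self_eq_norm_sq]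
      _ ≤ ‖z‖ * ‖(T' * T) z‖ := (RCLike.re_le_norm _).trans (norm_inner_le_norm _ _)
      _ ≤ K := by
          rw [hz, one_mul]
          exact (isSymmetric_adjoint_mul hT).norm_apply_le_of_norm_pow_apply_le hz hK (h z)
  calc ‖⟪T z, z⟫‖ ≤ ‖T z‖ * ‖z‖ := norm_inner_le_norm _ _
    _ ≤ √K := by rw [hz, mul_one]; exact Real.le_sqrt_of_sq_le hTz

theorem isSymmetric_smul_add_conj_smul (hT : ∀ x y, ⟪T x, y⟫ = ⟪x, T' y⟫) (c : 𝕜) :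
    (c • T + conj c • T').IsSymmetric := by
  intro x y
  simp only [LinearMap.add_apply, LinearMap.smul_apply, inner_add_left, inner_add_right,
    inner_smul_left, inner_smul_right, RCLike.conj_conj, hT, inner_adjoint_apply_left hT]
  ring

theorem norm_smul_add_conj_smul_apply_le (hT : ∀ x y, ⟪T x, y⟫ = ⟪x, T' y⟫) {w : ℝ}
    (hw0 : 0 ≤ w) (hw : ∀ z, ‖⟪T z, z⟫‖ ≤ w * ‖z‖ ^ 2) {c : 𝕜} (hc : ‖c‖ ≤ 1) (x : E) :
    ‖c • T x + conj c • T' x‖ ≤ 2 * w * ‖x‖ := by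
  refine (isSymmetric_smul_add_conj_smul hT c).norm_apply_le_of_abs_re_inner_le (by positivity)
    (fun z => ?_) x
  have hre : RCLike.re ⟪(c • T + conj c • T') z, z⟫ = 2 * RCLike.re (conj c * ⟪T z, z⟫) := by
    simp only [LinearMap.add_apply, LinearMap.smul_apply, inner_add_left, inner_smul_left,
      RCLike.conj_conj, inner_adjoint_apply_left hT, ← inner_conj_symm z (T z), map_add]
    rw [show c * conj ⟪T z, z⟫ = conj (conj c * ⟪T z, z⟫) by simp, RCLike.conj_re]
    ring
  rw [hre, abs_mul, abs_two, mul_assoc]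
  gcongr
  calc |RCLike.re (conj c * ⟪T z, z⟫)| ≤ ‖conj c * ⟪T z, z⟫‖ := RCLike.abs_re_le_norm _
    _ ≤ ‖⟪T z, z⟫‖ := by
      rw [norm_mul, RCLike.norm_conj]; exact mul_le_of_le_one_left (norm_nonneg _) hc
    _ ≤ w * ‖z‖ ^ 2 := hw z

end SemiInnerProductSpace

section ComplexSemiInnerProductSpace

variable {E : Type*} [SeminormedAddCommGroup E] [InnerProductSpace ℂ E] {T T' : E →ₗ[ℂ] E}
  {w : ℝ}

local notation "⟪" x ", " y "⟫" => inner ℂ x y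

theorem sq_norm_apply_add_sq_norm_adjoint_apply_le (hT : ∀ x y, ⟪T x, y⟫ = ⟪x, T' y⟫)
    (hw0 : 0 ≤ w) (hw : ∀ z, ‖⟪T z, z⟫‖ ≤ w * ‖z‖ ^ 2) (x : E) :
    ‖T x‖ ^ 2 + ‖T' x‖ ^ 2 ≤ (2 * w * ‖x‖) ^ 2 := by
  have hre := norm_smul_add_conj_smul_apply_le hT hw0 hw (c := 1) (by simp) x
  have him := norm_smul_add_conj_smul_apply_le hT hw0 hw (c := I) (by simp) x
  rw [map_one, one_smul, one_smul] at hre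
  rw [conj_I, neg_smul, ← sub_eq_add_neg, ← smul_sub, norm_smul, norm_I, one_mul] at him
  have hpar := parallelogram_law_with_norm ℂ (T x) (T' x)
  nlinarith [norm_nonneg (T x + T' x), norm_nonneg (T x - T' x)]

/-- Kittaneh's inequality. -/
theorem norm_adjoint_mul_add_mul_adjoint_apply_le (hT : ∀ x y, ⟪T x, y⟫ = ⟪x, T' y⟫)
    (hw0 : 0 ≤ w) (hw : ∀ z, ‖⟪T z, z⟫‖ ≤ w * ‖z‖ ^ 2) (x : E) :
    ‖(T' * T + T * T') x‖ ≤ 4 * w ^ 2 * ‖x‖ := by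
  refine norm_le_of_forall_re_inner_le (𝕜 := ℂ) (by positivity) fun y => ?_
  have hsplit : ⟪(T' * T + T * T') x, y⟫ = ⟪T x, T y⟫ + ⟪T' x, T' y⟫ := by
    rw [LinearMap.add_apply, Module.End.mul_apply, Module.End.mul_apply, inner_add_left,
      inner_adjoint_apply_left hT, hT (T' x)]
  have hx := sq_norm_apply_add_sq_norm_adjoint_apply_le hT hw0 hw x
  have hy := sq_norm_apply_add_sq_norm_adjoint_apply_le hT hw0 hw y
  have h1 : RCLike.re ⟪T x, T y⟫ ≤ ‖T x‖ * ‖T y‖ :=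
    (RCLike.re_le_norm _).trans (norm_inner_le_norm _ _)
  have h2 : RCLike.re ⟪T' x, T' y⟫ ≤ ‖T' x‖ * ‖T' y‖ :=
    (RCLike.re_le_norm _).trans (norm_inner_le_norm _ _)
  have hcs : ‖T x‖ * ‖T y‖ + ‖T' x‖ * ‖T' y‖ ≤ (2 * w * ‖x‖) * (2 * w * ‖y‖) := by
    rw [← pow_le_pow_iff_left₀ (by positivity) (by positivity) two_ne_zero]
    nlinarith [sq_nonneg (‖T x‖ * ‖T' y‖ - ‖T' x‖ * ‖T y‖),
      mul_le_mul hx hy (by positivity) (by positivity)]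
  rw [hsplit, map_add]
  linarith

end ComplexSemiInnerProductSpace

section BlockMatrix

variable {G : Type*} [NormedAddCommGroup G] [InnerProductSpace ℂ G]

theorem blk_apply (P Q R S : G →L[ℂ] G) (u : G × G) :
    blk P Q R S u = (P u.1 + Q u.2, R u.1 + S u.2) := rfl

theorem blk_mul_blk (P Q R S P₂ Q₂ R₂ S₂ : G →L[ℂ] G) :
    blk P Q R S * blk P₂ Q₂ R₂ S₂ =
      blk (P * P₂ + Q * R₂) (P * Q₂ + Q * S₂) (R * P₂ + S * R₂) (R * Q₂ + S * S₂) := by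
  ext u <;> simp [blk_apply]

theorem blk_add_blk (P Q R S P₂ Q₂ R₂ S₂ : G →L[ℂ] G) :
    blk P Q R S + blk P₂ Q₂ R₂ S₂ = blk (P + P₂) (Q + Q₂) (R + R₂) (S + S₂) := by
  ext u <;> simp [blk_apply]

theorem blk_offDiag_anticomm (X Y X' Y' : G →L[ℂ] G) :
    blk 0 Y' X' 0 * blk 0 X Y 0 + blk 0 X Y 0 * blk 0 Y' X' 0 =
      blk (X * X' + Y' * Y) 0 0 (X' * X + Y * Y') := by
  simp only [blk_mul_blk, blk_add_blk, mul_zero, zero_mul, add_zero, zero_add]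
  rw [add_comm (Y' * Y)]

theorem vnormB_inl (A : G →L[ℂ] G) (x : G) : vnormB A (x, 0) = vnormA A x := by
  simp [vnormB, vnormA, inn2, Bop, innA]

theorem vnormB_inr (A : G →L[ℂ] G) (x : G) : vnormB A (0, x) = vnormA A x := by
  simp [vnormB, vnormA, inn2, Bop, innA]

theorem isAAdjoint_zero [CompleteSpace G] (A : G →L[ℂ] G) : IsAAdjoint A 0 0 := by
  simp [IsAAdjoint]

theorem IsAAdjoint.inner_apply_left [CompleteSpace G] {A T T' : G →L[ℂ] G} (hA : A.IsPositive)
    (h : IsAAdjoint A T T') (x y : G) : inner ℂ (A (T x)) y = inner ℂ (A x) (T' y) := by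
  rw [hA.inner_left_eq_inner_right, ← adjoint_inner_right, ← ContinuousLinearMap.comp_apply, ← h,
    ContinuousLinearMap.comp_apply, hA.inner_left_eq_inner_right]

theorem opNormA_le {A T : G →L[ℂ] G} {c : ℝ} (hc : 0 ≤ c)
    (h : ∀ x, vnormA A x = 1 → vnormA A (T x) ≤ c) : opNormA A T ≤ c :=
  Real.sSup_le (fun _ ⟨x, _, hx, hr⟩ => hr ▸ h x hx) hc

end BlockMatrix

/-- `G × G` with the semi-inner product `⟨B u, v⟩`, `B = diag(A, A)`: a type synonym, so that its
seminorm `vnormB A` does not clash with the sup norm of `G × G`. -/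
def SemiHilbertProd {G : Type*} [NormedAddCommGroup G] [InnerProductSpace ℂ G]
    (_A : G →L[ℂ] G) : Type _ :=
  G × G

namespace SemiHilbertProd

variable {G : Type*} [NormedAddCommGroup G] [InnerProductSpace ℂ G] {A : G →L[ℂ] G}

instance : AddCommGroup (SemiHilbertProd A) := inferInstanceAs (AddCommGroup (G × G))

instance : Module ℂ (SemiHilbertProd A) := inferInstanceAs (Module ℂ (G × G))

variable (A) in
def toProd : SemiHilbertProd A ≃ₗ[ℂ] G × G := LinearEquiv.refl ℂ (G × G)

theorem inn2_Bop (u v : G × G) :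
    inn2 (Bop A u) v = inner ℂ (A u.1) v.1 + inner ℂ (A u.2) v.2 := rfl

@[reducible]
def core (hA : A.IsPositive) : PreInnerProductSpace.Core ℂ (SemiHilbertProd A) where
  inner u v := inn2 (Bop A u) v
  conj_inner_symm (u v : G × G) := by
    simp only [inn2_Bop, map_add, inner_conj_symm, hA.inner_left_eq_inner_right]
  re_inner_nonneg u := add_nonneg (hA.re_inner_nonneg_left _) (hA.re_inner_nonneg_left _)
  add_left (u v w : G × G) := by
    change inn2 (Bop A (u + v)) w = _
    simp only [map_add, inn2, Prod.fst_add, Prod.snd_add, inner_add_left]; ring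
  smul_left (u v : G × G) c := by
    change inn2 (Bop A (c • u)) v = _
    simp only [map_smul, inn2, Prod.smul_fst, Prod.smul_snd, inner_smul_left]; ring

instance [Fact A.IsPositive] : SeminormedAddCommGroup (SemiHilbertProd A) :=
  @InnerProductSpace.Core.toSeminormedAddCommGroup _ _ _ _ _ (core Fact.out)

instance [Fact A.IsPositive] : InnerProductSpace ℂ (SemiHilbertProd A) :=
  InnerProductSpace.ofCore (core Fact.out)

variable (A) in
def toEnd : (G × G →L[ℂ] G × G) →+* Module.End ℂ (SemiHilbertProd A) :=
  ContinuousLinearMap.toLinearMapRingHom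

theorem toProd_toEnd_apply (S : G × G →L[ℂ] G × G) (u : SemiHilbertProd A) :
    toProd A (toEnd A S u) = S (toProd A u) := rfl

theorem toEnd_toProd_symm (S : G × G →L[ℂ] G × G) (u : G × G) :
    toEnd A S ((toProd A).symm u) = (toProd A).symm (S u) := rfl

variable [Fact A.IsPositive]

theorem norm_toProd_symm (u : G × G) : ‖(toProd A).symm u‖ = vnormB A u := rfl

theorem inner_def (u v : SemiHilbertProd A) :
    inner ℂ u v = inner ℂ (A (toProd A u).1) (toProd A v).1 +
      inner ℂ (A (toProd A u).2) (toProd A v).2 := rfl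

theorem numRadius_toEnd (S : G × G →L[ℂ] G × G) : (toEnd A S).numRadius = wB A S := rfl

theorem norm_le_norm_toProd (u : SemiHilbertProd A) : ‖u‖ ≤ √(2 * ‖A‖) * ‖toProd A u‖ := by
  set v := toProd A u
  have hcomp : ∀ x : G, ‖x‖ ≤ ‖v‖ → RCLike.re (inner ℂ (A x) x) ≤ ‖A‖ * ‖v‖ ^ 2 := by
    intro x hx
    calc RCLike.re (inner ℂ (A x) x) ≤ ‖A x‖ * ‖x‖ :=
          (RCLike.re_le_norm _).trans (norm_inner_le_norm _ _)
      _ ≤ ‖A‖ * ‖x‖ * ‖x‖ := by gcongr; exact A.le_opNorm x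
      _ ≤ ‖A‖ * ‖v‖ ^ 2 := by rw [mul_assoc, ← sq]; gcongr
  have hsq : ‖u‖ ^ 2 ≤ 2 * ‖A‖ * ‖v‖ ^ 2 := by
    rw [@norm_sq_eq_re_inner ℂ, inner_def, map_add]
    linarith [hcomp _ (norm_fst_le v), hcomp _ (norm_snd_le v)]
  calc ‖u‖ = √(‖u‖ ^ 2) := (Real.sqrt_sq (norm_nonneg _)).symm
    _ ≤ √(2 * ‖A‖ * ‖v‖ ^ 2) := Real.sqrt_le_sqrt hsq
    _ = √(2 * ‖A‖) * ‖v‖ := by rw [Real.sqrt_mul (by positivity), Real.sqrt_sq (norm_nonneg _)]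

theorem norm_toEnd_pow_apply_le (S : G × G →L[ℂ] G × G) (u : SemiHilbertProd A) (n : ℕ) :
    ‖(toEnd A S ^ n) u‖ ≤ √(2 * ‖A‖) * ‖toProd A u‖ * ‖S‖ ^ n := by
  have hpow : ∀ (x : G × G) (n : ℕ), ‖(S ^ n) x‖ ≤ ‖x‖ * ‖S‖ ^ n := by
    intro x n
    induction n with
    | zero => simp
    | succ n ih =>
      rw [pow_succ', mul_apply_eq_comp]
      calc ‖S ((S ^ n) x)‖ ≤ ‖S‖ * ‖(S ^ n) x‖ := S.le_opNorm _
        _ ≤ ‖S‖ * (‖x‖ * ‖S‖ ^ n) := by gcongr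
        _ = ‖x‖ * ‖S‖ ^ (n + 1) := by ring
  calc ‖(toEnd A S ^ n) u‖ ≤ √(2 * ‖A‖) * ‖toProd A ((toEnd A S ^ n) u)‖ := norm_le_norm_toProd _
    _ = √(2 * ‖A‖) * ‖(S ^ n) (toProd A u)‖ := by rw [← map_pow, toProd_toEnd_apply]
    _ ≤ √(2 * ‖A‖) * ‖toProd A u‖ * ‖S‖ ^ n := by rw [mul_assoc]; gcongr; exact hpow _ n

theorem inner_toEnd_blk [CompleteSpace G] {P Q R S P' Q' R' S' : G →L[ℂ] G}
    (hP : IsAAdjoint A P P') (hQ : IsAAdjoint A Q Q') (hR : IsAAdjoint A R R')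
    (hS : IsAAdjoint A S S') (u v : SemiHilbertProd A) :
    inner ℂ (toEnd A (blk P Q R S) u) v = inner ℂ u (toEnd A (blk P' R' Q' S') v) := by
  have hA : A.IsPositive := Fact.out
  simp only [inner_def, toProd_toEnd_apply, blk_apply, map_add, inner_add_left, inner_add_right,
    hP.inner_apply_left hA, hQ.inner_apply_left hA, hR.inner_apply_left hA,
    hS.inner_apply_left hA]
  ring

theorem opNormA_le_of_norm_toEnd_blk_le {D₁ D₂ : G →L[ℂ] G} {c : ℝ} (hc : 0 ≤ c)
    (h : ∀ u, ‖toEnd A (blk D₁ 0 0 D₂) u‖ ≤ c * ‖u‖) : opNormA A D₁ ≤ c ∧ opNormA A D₂ ≤ c := by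
  constructor <;> refine opNormA_le hc fun x hx => ?_
  · simpa [toEnd_toProd_symm, norm_toProd_symm, blk_apply, vnormB_inl, hx] using
      h ((toProd A).symm (x, 0))
  · simpa [toEnd_toProd_symm, norm_toProd_symm, blk_apply, vnormB_inr, hx] using
      h ((toProd A).symm (0, x))

end SemiHilbertProd

open SemiHilbertProd

theorem stmt8 (A X Y X' Y' : H →L[ℂ] H) (hA : A.IsPositive)
    (hX : IsAAdjoint A X X') (hY : IsAAdjoint A Y Y') :
    (1/4) * max (opNormA A (X * X' + Y' * Y)) (opNormA A (X' * X + Y * Y')) ≤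
      (wB A (blk 0 X Y 0))^2 := by
  have : Fact A.IsPositive := ⟨hA⟩
  set T := toEnd A (blk 0 X Y 0)
  set T' := toEnd A (blk 0 Y' X' 0)
  have hT : ∀ u v, inner ℂ (T u) v = inner ℂ u (T' v) :=
    inner_toEnd_blk (isAAdjoint_zero A) hX hY (isAAdjoint_zero A)
  have hbdd := bddAbove_norm_inner_apply_self hT (norm_nonneg (blk 0 Y' X' 0 * blk 0 X Y 0))
    fun u n => by rw [← map_mul]; exact norm_toEnd_pow_apply_le _ u n
  have hkit := norm_adjoint_mul_add_mul_adjoint_apply_le hT T.numRadius_nonneg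
    (T.norm_inner_apply_self_le_numRadius_mul hbdd)
  simp only [T, T', numRadius_toEnd, ← map_mul, ← map_add, blk_offDiag_anticomm] at hkit
  obtain ⟨h₁, h₂⟩ := opNormA_le_of_norm_toEnd_blk_le (by positivity) hkit
  rw [one_div, inv_mul_le_iff₀ four_pos]
  exact max_le h₁ h₂
end
end

section
/- Let A be a positive operator on H, B = diag(A,A), and X, Y ∈ B_A(H). Then w_B([[0,X],[Y,0]])² ≤ (1/2)·max{‖XX^{♯A} + Y^{♯A}Y‖_A, ‖X^{♯A}X + YY^{♯A}‖_A}. -/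
noncomputable section
open Complex ContinuousLinearMap

variable {H : Type*} [NormedAddCommGroup H] [InnerProductSpace ℂ H] [CompleteSpace H]

/-!
Write `A = R* R` (e.g. `R = A^{1/2}`), so that `⟨x, y⟩_A = ⟪R x, R y⟫`. For `u = (x, y)` the
quantity `⟨T u, u⟩_B` of `T = [[0, X], [Y, 0]]` equals `⟪R X y, R x⟫ + ⟪R Y x, R y⟫`, and also,
moving `X` and `Y` across, `⟪R y, R X♯ x⟫ + ⟪R x, R Y♯ y⟫`. Bounding both by Cauchy–Schwarz,
multiplying, and applying AM–GM and Cauchy–Schwarz in `ℝ²` against `(‖x‖_A, ‖y‖_A)` gives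
`|⟨T u, u⟩_B|² ≤ ½ (‖X♯ x‖_A² + ‖Y x‖_A² + ‖X y‖_A² + ‖Y♯ y‖_A²)`. Finally
`‖X♯ x‖_A² + ‖Y x‖_A² = ⟨(X X♯ + Y♯ Y) x, x⟩_A ≤ ‖X X♯ + Y♯ Y‖_A ‖x‖_A²`, and similarly for `y`.

The last inequality needs `‖P x‖_A ≤ ‖P‖_A ‖x‖_A` for every `x`, while `‖P‖_A` is a supremum over
the closure of the range of `A` only: the kernel of `A` is its orthogonal complement and is killed
by `R ∘ P` for `A`-selfadjoint `P`. That this supremum is finite follows from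
`‖P x‖_A ^ 2ⁿ ≤ ‖P ^ 2ⁿ x‖_A` on `A`-unit vectors.
-/

open scoped InnerProductSpace

theorem le_of_forall_pow_two_pow_le_mul {a b C : ℝ} (hb : 0 ≤ b)
    (h : ∀ n : ℕ, a ^ 2 ^ n ≤ C * b ^ 2 ^ n) : a ≤ b := by
  by_contra! hba
  obtain ⟨c, hbc, hca⟩ := exists_between hba
  have hc : 0 < c := hb.trans_lt hbc
  have hq : 1 < a / c := (one_lt_div hc).mpr hca
  have hC : 0 ≤ C := by
    by_contra! hC
    have h0 := h 0
    rw [pow_zero, pow_one, pow_one] at h0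
    nlinarith
  have bounded : ∀ n : ℕ, (a / c) ^ 2 ^ n ≤ C := fun n => by
    rw [div_pow, div_le_iff₀ (by positivity)]
    calc a ^ 2 ^ n ≤ C * b ^ 2 ^ n := h n
      _ ≤ C * c ^ 2 ^ n := by gcongr
  obtain ⟨n, hn⟩ := pow_unbounded_of_one_lt C hq
  have := pow_le_pow_right₀ hq.le (Nat.lt_two_pow_self (n := n)).le
  linarith [bounded n]

theorem sq_sSup_le {S : Set ℝ} {c : ℝ} (hc : 0 ≤ c)
    (h : ∀ r ∈ S, 0 ≤ r ∧ r ^ 2 ≤ c) : sSup S ^ 2 ≤ c := by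
  have hle : sSup S ≤ √c := Real.sSup_le (fun r hr => Real.le_sqrt_of_sq_le (h r hr).2)
    (Real.sqrt_nonneg c)
  have hnonneg : 0 ≤ sSup S := Real.sSup_nonneg fun r hr => (h r hr).1
  calc sSup S ^ 2 ≤ √c ^ 2 := by gcongr
    _ = c := Real.sq_sqrt hc

theorem sq_le_half_max {p q a b c d t M N : ℝ} (ht : 0 ≤ t) (hpq : p ^ 2 + q ^ 2 = 1)
    (h₁ : t ≤ a * p + b * q) (h₂ : t ≤ q * c + p * d)
    (hM : c ^ 2 + b ^ 2 ≤ M * p ^ 2) (hN : a ^ 2 + d ^ 2 ≤ N * q ^ 2) :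
    t ^ 2 ≤ 1 / 2 * max M N := by
  have hp : M * p ^ 2 ≤ max M N * p ^ 2 := by gcongr; exact le_max_left M N
  have hq : N * q ^ 2 ≤ max M N * q ^ 2 := by gcongr; exact le_max_right M N
  calc t ^ 2 ≤ (a * p + b * q) * (q * c + p * d) := by
        rw [sq]; exact mul_le_mul h₁ h₂ ht (ht.trans h₁)
    _ ≤ ((a * p + b * q) ^ 2 + (q * c + p * d) ^ 2) / 2 := by
        linarith [two_mul_le_add_sq (a * p + b * q) (q * c + p * d)]
    _ ≤ ((a ^ 2 + b ^ 2) + (c ^ 2 + d ^ 2)) / 2 := by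
        -- Cauchy–Schwarz in `ℝ²` against the unit vector `(p, q)`
        nlinarith [sq_nonneg (a * q - b * p), sq_nonneg (c * p - d * q)]
    _ ≤ (M * p ^ 2 + N * q ^ 2) / 2 := by linarith
    _ ≤ 1 / 2 * max M N := by nlinarith

section AdjointWrt

variable {𝕜 E F : Type*} [RCLike 𝕜] [NormedAddCommGroup E] [InnerProductSpace 𝕜 E]
  [NormedAddCommGroup F] [NormedSpace 𝕜 F]

/-- With `R = A^{1/2}` this is the relation `A S = T* A` of `IsAAdjoint A T S`. -/
def IsAdjointWrt (R : F →L[𝕜] E) (T S : F →L[𝕜] F) : Prop :=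
  ∀ x y, ⟪R (T x), R y⟫_𝕜 = ⟪R x, R (S y)⟫_𝕜

variable {R : F →L[𝕜] E} {T S T' S' P : F →L[𝕜] F}

theorem IsAdjointWrt.symm (h : IsAdjointWrt R T S) : IsAdjointWrt R S T := fun x y => by
  rw [← inner_conj_symm, ← h, inner_conj_symm]

theorem IsAdjointWrt.mul (h : IsAdjointWrt R T S) (h' : IsAdjointWrt R T' S') :
    IsAdjointWrt R (T * T') (S' * S) := fun x y => by
  simp only [mul_apply_eq_comp, h _ y, h' x]

theorem IsAdjointWrt.add (h : IsAdjointWrt R T S) (h' : IsAdjointWrt R T' S') :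
    IsAdjointWrt R (T + T') (S + S') := fun x y => by
  simp only [add_apply, map_add, inner_add_left, inner_add_right, h x y,
    h' x y]

theorem IsAdjointWrt.pow (h : IsAdjointWrt R P P) (n : ℕ) : IsAdjointWrt R (P ^ n) (P ^ n) := by
  induction n with
  | zero => intro x y; rfl
  | succ n ih => simpa only [← pow_succ, ← pow_succ'] using ih.mul h

theorem IsAdjointWrt.re_inner_mul_apply (h : IsAdjointWrt R T S) (x : F) :
    RCLike.re ⟪R ((T * S) x), R x⟫_𝕜 = ‖R (S x)‖ ^ 2 := by
  rw [mul_apply_eq_comp, h, inner_self_eq_norm_sq]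

theorem IsAdjointWrt.sq_norm_apply_le (h : IsAdjointWrt R P P) (x : F) :
    ‖R (P x)‖ ^ 2 ≤ ‖R ((P * P) x)‖ * ‖R x‖ := by
  rw [← h.re_inner_mul_apply]
  exact (RCLike.re_le_norm _).trans (norm_inner_le_norm _ _)

theorem IsAdjointWrt.apply_eq_zero (h : IsAdjointWrt R P P) {x : F} (hx : R x = 0) :
    R (P x) = 0 := by
  have := h.sq_norm_apply_le x
  rw [hx, norm_zero, mul_zero] at this
  exact norm_eq_zero.mp (pow_eq_zero_iff two_ne_zero |>.mp (le_antisymm this (by positivity)))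

theorem IsAdjointWrt.pow_norm_apply_le (h : IsAdjointWrt R P P) {x : F} (hx : ‖R x‖ = 1)
    (n : ℕ) : ‖R (P x)‖ ^ 2 ^ n ≤ ‖R ((P ^ 2 ^ n) x)‖ := by
  induction n with
  | zero => simp
  | succ n ih =>
    calc ‖R (P x)‖ ^ 2 ^ (n + 1) = (‖R (P x)‖ ^ 2 ^ n) ^ 2 := by rw [pow_succ, pow_mul]
      _ ≤ ‖R ((P ^ 2 ^ n) x)‖ ^ 2 := by gcongr
      _ ≤ ‖R ((P ^ 2 ^ n * P ^ 2 ^ n) x)‖ * ‖R x‖ := (h.pow _).sq_norm_apply_le x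
      _ = ‖R ((P ^ 2 ^ (n + 1)) x)‖ := by rw [hx, mul_one, ← pow_add, ← two_mul, pow_succ']

/-- The spectral-radius trick: `‖R (P x)‖ ^ 2ⁿ ≤ ‖R‖ ‖P‖ ^ 2ⁿ ‖x‖`, then take `2ⁿ`-th
roots. -/
theorem IsAdjointWrt.norm_apply_le_opNorm (h : IsAdjointWrt R P P) {x : F} (hx : ‖R x‖ = 1) :
    ‖R (P x)‖ ≤ ‖P‖ := by
  refine le_of_forall_pow_two_pow_le_mul (C := ‖R‖ * ‖x‖) (norm_nonneg P) fun n => ?_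
  calc ‖R (P x)‖ ^ 2 ^ n ≤ ‖R ((P ^ 2 ^ n) x)‖ := h.pow_norm_apply_le hx n
    _ ≤ ‖R‖ * (‖P ^ 2 ^ n‖ * ‖x‖) := R.le_opNorm_of_le ((P ^ 2 ^ n).le_opNorm x)
    _ ≤ ‖R‖ * (‖P‖ ^ 2 ^ n * ‖x‖) := by gcongr; exact norm_pow_le' P (by positivity)
    _ = ‖R‖ * ‖x‖ * ‖P‖ ^ 2 ^ n := by ring

end AdjointWrt

section SemiInner

variable {E : Type*} [NormedAddCommGroup E] [InnerProductSpace ℂ E]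
  {A : H →L[ℂ] H} {R : H →L[ℂ] E}

theorem inner_apply_eq_inner_sqrt (hA : A.IsPositive) (x y : H) :
    ⟪A x, y⟫_ℂ = ⟪CFC.sqrt A x, CFC.sqrt A y⟫_ℂ := by
  have hA₀ : 0 ≤ A := (nonneg_iff_isPositive A).mpr hA
  have hsqrt : adjoint (CFC.sqrt A) = CFC.sqrt A :=
    isSelfAdjoint_iff'.mp ((nonneg_iff_isPositive _).mp (CFC.sqrt_nonneg A)).isSelfAdjoint
  conv_lhs => rw [← CFC.sqrt_mul_sqrt_self A hA₀]
  rw [mul_apply_eq_comp, ← adjoint_inner_left, hsqrt]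

omit [CompleteSpace H] in
theorem opNormA_nonneg (T : H →L[ℂ] H) : 0 ≤ opNormA A T :=
  Real.sSup_nonneg <| by rintro r ⟨x, -, -, rfl⟩; exact Real.sqrt_nonneg _

variable (hR : ∀ x y, ⟪A x, y⟫_ℂ = ⟪R x, R y⟫_ℂ)
include hR

section

omit [CompleteSpace H]

theorem sq_norm_eq_re_inner (x : H) : ‖R x‖ ^ 2 = (⟪A x, x⟫_ℂ).re := by
  rw [hR, ← RCLike.re_to_complex, inner_self_eq_norm_sq]

theorem vnormA_eq_norm (x : H) : vnormA A x = ‖R x‖ := by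
  rw [vnormA, innA, ← sq_norm_eq_re_inner hR, Real.sqrt_sq (norm_nonneg _)]

theorem bddAbove_opNormA {P : H →L[ℂ] H} (hP : IsAdjointWrt R P P) :
    BddAbove {r : ℝ | ∃ x : H,
      x ∈ closure (Set.range A) ∧ vnormA A x = 1 ∧ r = vnormA A (P x)} := by
  refine ⟨‖P‖, ?_⟩
  rintro r ⟨x, -, hx, rfl⟩
  rw [vnormA_eq_norm hR] at hx ⊢
  exact hP.norm_apply_le_opNorm hx

end

theorem IsAAdjoint.isAdjointWrt {T S : H →L[ℂ] H} (h : IsAAdjoint A T S) :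
    IsAdjointWrt R T S := by
  refine IsAdjointWrt.symm fun x y => ?_
  rw [← hR, ← hR, ← mul_apply_eq_comp, ContinuousLinearMap.mul_def, h, comp_apply,
    adjoint_inner_left]

theorem adjoint_eq_self_of_inner_eq : adjoint A = A := by
  refine isSelfAdjoint_iff'.mp (isSelfAdjoint_iff_isSymmetric.mpr fun x y => ?_)
  change ⟪A x, y⟫_ℂ = ⟪x, A y⟫_ℂ
  rw [← inner_conj_symm x, hR, hR, inner_conj_symm]

theorem exists_eq_add_mem_closure_range (x : H) :
    ∃ r ∈ closure (Set.range A), ∃ k, R k = 0 ∧ x = r + k := by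
  set K := (LinearMap.range (A : H →ₗ[ℂ] H)).topologicalClosure
  have : CompleteSpace K := (Submodule.isClosed_topologicalClosure _).completeSpace_coe
  obtain ⟨r, hr, k, hk, rfl⟩ := K.exists_add_mem_mem_orthogonal x
  rw [← SetLike.mem_coe, Submodule.topologicalClosure_coe, LinearMap.coe_range, coe_coe] at hr
  refine ⟨r, hr, k, ?_, rfl⟩
  have hAk : A k = 0 := by
    rw [Submodule.orthogonal_closure] at hk
    have := (orthogonal_range A ▸ hk : k ∈ (adjoint A).ker)
    rwa [adjoint_eq_self_of_inner_eq hR] at this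
  have : ‖R k‖ ^ 2 = 0 := by rw [sq_norm_eq_re_inner hR, hAk, inner_zero_left, Complex.zero_re]
  exact norm_eq_zero.mp (pow_eq_zero_iff two_ne_zero |>.mp this)

theorem norm_apply_le_opNormA_mul {P : H →L[ℂ] H} (hP : IsAdjointWrt R P P) (x : H) :
    ‖R (P x)‖ ≤ opNormA A P * ‖R x‖ := by
  obtain ⟨r, hr, k, hk, rfl⟩ := exists_eq_add_mem_closure_range hR x
  simp only [map_add, hk, hP.apply_eq_zero hk, add_zero]
  rcases eq_or_ne (R r) 0 with hr₀ | hr₀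
  · simp only [hr₀, hP.apply_eq_zero hr₀, norm_zero, mul_zero, le_refl]
  have hpos : 0 < ‖R r‖ := norm_pos_iff.mpr hr₀
  set c : ℂ := ((‖R r‖⁻¹ : ℝ) : ℂ)
  have hc : ‖c‖ = ‖R r‖⁻¹ := by simp [c]
  have hunit : vnormA A (c • r) = 1 := by
    rw [vnormA_eq_norm hR, map_smul, norm_smul, hc, inv_mul_cancel₀ hpos.ne']
  have hmem : c • r ∈ closure (Set.range A) := by
    rw [← coe_coe, ← LinearMap.coe_range] at hr ⊢
    exact Submodule.mapsTo_smul_closure _ c hr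
  have := le_csSup (bddAbove_opNormA hR hP) ⟨c • r, hmem, hunit, rfl⟩
  rw [vnormA_eq_norm hR, map_smul, map_smul, norm_smul, hc] at this
  rwa [← opNormA, inv_mul_le_iff₀ hpos, mul_comm] at this

theorem sq_norm_add_sq_norm_le_opNormA {T S T' S' : H →L[ℂ] H} (h : IsAdjointWrt R T S)
    (h' : IsAdjointWrt R T' S') (x : H) :
    ‖R (S x)‖ ^ 2 + ‖R (S' x)‖ ^ 2 ≤ opNormA A (T * S + T' * S') * ‖R x‖ ^ 2 := by
  have hP : IsAdjointWrt R (T * S + T' * S') (T * S + T' * S') :=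
    (h.mul h.symm).add (h'.mul h'.symm)
  calc ‖R (S x)‖ ^ 2 + ‖R (S' x)‖ ^ 2
      = RCLike.re ⟪R ((T * S + T' * S') x), R x⟫_ℂ := by
        rw [← h.re_inner_mul_apply, ← h'.re_inner_mul_apply, add_apply, map_add, inner_add_left,
          map_add]
    _ ≤ ‖R ((T * S + T' * S') x)‖ * ‖R x‖ :=
        (RCLike.re_le_norm _).trans (norm_inner_le_norm _ _)
    _ ≤ opNormA A (T * S + T' * S') * ‖R x‖ * ‖R x‖ := by
        gcongr; exact norm_apply_le_opNormA_mul hR hP x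
    _ = opNormA A (T * S + T' * S') * ‖R x‖ ^ 2 := by ring

theorem sq_norm_inn2_blk_le {X Y X' Y' : H →L[ℂ] H} (hX : IsAdjointWrt R X X')
    (hY : IsAdjointWrt R Y Y') {u : H × H} (hu : vnormB A u = 1) :
    ‖inn2 (Bop A (blk 0 X Y 0 u)) u‖ ^ 2 ≤
      1 / 2 * max (opNormA A (X * X' + Y' * Y)) (opNormA A (X' * X + Y * Y')) := by
  obtain ⟨x, y⟩ := u
  have hunit : ‖R x‖ ^ 2 + ‖R y‖ ^ 2 = 1 := by
    rw [vnormB, Real.sqrt_eq_one] at hu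
    rw [sq_norm_eq_re_inner hR, sq_norm_eq_re_inner hR, ← hu]
    simp [inn2, Bop]
  have hval : inn2 (Bop A (blk 0 X Y 0 (x, y))) (x, y) =
      ⟪R (X y), R x⟫_ℂ + ⟪R (Y x), R y⟫_ℂ := by
    simp [inn2, Bop, blk, hR]
  refine sq_le_half_max (norm_nonneg _) hunit ?_ ?_
    (sq_norm_add_sq_norm_le_opNormA hR hX hY.symm x)
    (sq_norm_add_sq_norm_le_opNormA hR hX.symm hY y)
  · rw [hval]
    exact (norm_add_le _ _).trans (add_le_add (norm_inner_le_norm _ _) (norm_inner_le_norm _ _))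
  · rw [hval, hX y x, hY x y]
    exact (norm_add_le _ _).trans (add_le_add (norm_inner_le_norm _ _) (norm_inner_le_norm _ _))

end SemiInner

theorem stmt9 (A X Y X' Y' : H →L[ℂ] H) (hA : A.IsPositive)
    (hX : IsAAdjoint A X X') (hY : IsAAdjoint A Y Y') :
    (wB A (blk 0 X Y 0))^2 ≤
      (1/2) * max (opNormA A (X * X' + Y' * Y)) (opNormA A (X' * X + Y * Y')) := by
  have hR := inner_apply_eq_inner_sqrt hA
  have hbound : 0 ≤ (1 / 2 : ℝ) *
      max (opNormA A (X * X' + Y' * Y)) (opNormA A (X' * X + Y * Y')) :=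
    mul_nonneg (by norm_num) ((opNormA_nonneg _).trans (le_max_left _ _))
  refine sq_sSup_le hbound ?_
  rintro r ⟨u, hu, rfl⟩
  exact ⟨norm_nonneg _, sq_norm_inn2_blk_le hR (hX.isAdjointWrt hR) (hY.isAdjointWrt hR) hu⟩
end
end
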